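/- Let A and Ã be invertible n×n real matrices and 1 ≤ l < n, and suppose that the columns of A and Ã agree for all indices k with l < k ≤ n, i.e. A e_k = Ã e_k for all k > l. Then the vectors Y_k* computed from A coincide with the vectors Y_k* computed from Ã for all k > l; that is, the system (Y_k*)_{k=l+1}^n is uniquely determined by the columns (X_k)_{k=l+1}^n. -/

import Mathlib

open Matrix

noncomputable section

/-- `k`-th column of a matrix, as a vector of `EuclideanSpace ℝ (Fin n)`. -/
def col {n m : ℕ} (A : Matrix (Fin n) (Fin m) ℝ) (k : Fin m) : EuclideanSpace ℝ (Fin n) :=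
  WithLp.toLp 2 (fun i => A i k)

/-- A plain vector viewed in `EuclideanSpace ℝ (Fin n)`. -/
def toE {n : ℕ} (x : Fin n → ℝ) : EuclideanSpace ℝ (Fin n) := WithLp.toLp 2 x

/-- The `n × l` matrix of the first `l` columns of `A` (junk `0` columns if `l > n`). -/
def firstCols {n : ℕ} (A : Matrix (Fin n) (Fin n) ℝ) (l : ℕ) : Matrix (Fin n) (Fin l) ℝ :=
  fun i j => if h : (j : ℕ) < n then A i ⟨j, h⟩ else 0

/-- The `n × (n-l)` matrix of the last `n - l` columns of `A`. -/
def lastCols {n : ℕ} (A : Matrix (Fin n) (Fin n) ℝ) (l : ℕ) : Matrix (Fin n) (Fin (n - l)) ℝ :=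
  fun i j => A i ⟨l + j, by have := j.isLt; omega⟩

/-- `H_l`: the span of the last `n - l` columns of `A`, i.e. the columns `X_k` with
(0-based) index `k ≥ l` (paper's 1-based indices `k > l`). -/
def Hspan {n : ℕ} (A : Matrix (Fin n) (Fin n) ℝ) (l : ℕ) :
    Submodule ℝ (EuclideanSpace ℝ (Fin n)) :=
  Submodule.span ℝ (col A '' {k | l ≤ (k : ℕ)})

/-- `H_{l,k}`: the span of the columns `X_j` with (0-based) index `j ≥ l`, `j ≠ k`. -/
def Hspan' {n : ℕ} (A : Matrix (Fin n) (Fin n) ℝ) (l : ℕ) (k : Fin n) :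
    Submodule ℝ (EuclideanSpace ℝ (Fin n)) :=
  Submodule.span ℝ (col A '' {j | l ≤ (j : ℕ) ∧ j ≠ k})

/-- `Y_k* = P_l X_k*`, where `X_k*` is the `k`-th column of `(A⁻¹)ᵀ` and `P_l` is the
orthogonal projection onto `H_l`. -/
def Ystar {n : ℕ} (A : Matrix (Fin n) (Fin n) ℝ) (l : ℕ) (k : Fin n) :
    EuclideanSpace ℝ (Fin n) :=
  ↑((Hspan A l).orthogonalProjectionOnto (col A⁻¹ᵀ k))

/-- The `(n-l) × n` matrix `B` whose rows are `(Y_k*)ᵀ` for `k` ranging over the last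
`n - l` indices. -/
def Bmat {n : ℕ} (A : Matrix (Fin n) (Fin n) ℝ) (l : ℕ) : Matrix (Fin (n - l)) (Fin n) ℝ :=
  fun r i => Ystar A l ⟨l + r, by have := r.isLt; omega⟩ i

/-- Squared Hilbert–Schmidt (Frobenius) norm of a matrix. -/
def hsNormSq {n m : ℕ} (B : Matrix (Fin m) (Fin n) ℝ) : ℝ :=
  ∑ r, ∑ i, (B r i) ^ 2

/-- Hilbert–Schmidt (Frobenius) norm of a matrix. -/
def hsNorm {n m : ℕ} (B : Matrix (Fin m) (Fin n) ℝ) : ℝ :=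
  Real.sqrt (hsNormSq B)

/-- Operator (`ℓ² → ℓ²`) norm of a matrix, as the supremum of `‖Bx‖₂` over the unit
sphere. -/
def opNorm {n m : ℕ} (B : Matrix (Fin m) (Fin n) ℝ) : ℝ :=
  sSup ((fun x : EuclideanSpace ℝ (Fin n) => ‖toE (B *ᵥ fun i => x i)‖) '' {x | ‖x‖ = 1})

/-! The vectors `X_k*` are biorthogonal to the columns: `⟪X_k*, X_j⟫ = δ_kj`. An orthogonal
projection `P_K x` depends only on the inner products of `x` with a spanning set of `K`, so
`Y_k* = P_l X_k*` depends only on `H_l` and on the numbers `⟪X_k*, X_j⟫ = δ_kj` for the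
columns `X_j` spanning `H_l`. -/

open scoped InnerProductSpace

theorem Submodule.starProjection_span_eq_of_inner_eq {𝕜 E : Type*} [RCLike 𝕜]
    [NormedAddCommGroup E] [InnerProductSpace 𝕜 E] {s : Set E}
    [(span 𝕜 s).HasOrthogonalProjection] {x x' : E} (h : ∀ v ∈ s, ⟪x, v⟫_𝕜 = ⟪x', v⟫_𝕜) :
    (span 𝕜 s).starProjection x = (span 𝕜 s).starProjection x' := by
  rw [← sub_eq_zero, ← map_sub, starProjection_apply_eq_zero_iff]
  refine (isOrtho_span.2 fun v hv w hw => ?_).ge (subset_span rfl)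
  subst hw
  rw [inner_eq_zero_symm, inner_sub_left, h v hv, sub_self]

theorem inner_col_transpose_col {m n p : ℕ} (B : Matrix (Fin m) (Fin n) ℝ)
    (A : Matrix (Fin n) (Fin p) ℝ) (k : Fin m) (j : Fin p) :
    ⟪_root_.col Bᵀ k, _root_.col A j⟫_ℝ = (B * A) k j := by
  simp [_root_.col, PiLp.inner_apply, Matrix.mul_apply, mul_comm]

theorem Ystar_determined_by_last_columns_general (n l : ℕ)
    (A A' : Matrix (Fin n) (Fin n) ℝ) (hA : IsUnit A) (hA' : IsUnit A')
    (hcols : ∀ k : Fin n, l ≤ (k : ℕ) → ∀ i, A i k = A' i k) :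
    ∀ k : Fin n, l ≤ (k : ℕ) → Ystar A l k = Ystar A' l k := by
  intro k _
  have hcol : ∀ j : Fin n, l ≤ (j : ℕ) → _root_.col A j = _root_.col A' j := fun j hj => by
    ext i; exact hcols j hj i
  have hspan : Hspan A' l = Hspan A l :=
    congrArg _ (Set.image_congr fun j hj => (hcol j hj).symm)
  change (Hspan A l).starProjection _ = (Hspan A' l).starProjection _
  rw [hspan]
  apply Submodule.starProjection_span_eq_of_inner_eq
  rintro _ ⟨j, hj, rfl⟩
  rw [inner_col_transpose_col, hcol j hj, inner_col_transpose_col,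
    nonsing_inv_mul _ ((isUnit_iff_isUnit_det A).1 hA),
    nonsing_inv_mul _ ((isUnit_iff_isUnit_det A').1 hA')]

/-- **Corollary 2.3.** The system `(Y_k*)` is uniquely determined by the last `n - l`
columns of the matrix: if two invertible matrices `A, A'` have the same columns at all
indices `k` with `l ≤ k`, then the corresponding vectors `Y_k*` coincide. -/
theorem Ystar_determined_by_last_columns (n l : ℕ) (hl : 1 ≤ l) (hln : l < n)
    (A A' : Matrix (Fin n) (Fin n) ℝ) (hA : IsUnit A) (hA' : IsUnit A')
    (hcols : ∀ k : Fin n, l ≤ (k : ℕ) → ∀ i, A i k = A' i k) :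
    ∀ k : Fin n, l ≤ (k : ℕ) → Ystar A l k = Ystar A' l k :=
  Ystar_determined_by_last_columns_general n l A A' hA hA' hcols

end
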